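/- arXiv:2112.08092 — 5 statements merged into one kernel-verified Lean document; each statement's English description precedes it below -/
import Mathlib

section
/- Let (Ω, ℱ, P) be a probability space, let U₁, U₀, V : Ω → ℝ be random variables, let X : Ω → ℝ^k and Z : Ω → ℝ^m be random vectors, and let p : ℝ^k × ℝ^m → ℝ be a measurable function. Assume the triple (U₁, U₀, V) is independent of the pair (X, Z). Define D := 𝟙{V ≤ p(X,Z)} and U := D·U₁ + (1−D)·U₀. Then for every Borel set A ⊆ ℝ and every Borel set B ⊆ ℝ^k × ℝ^m, writing μ for the law of (X,Z): P(U ∈ A, D = 1, (X,Z) ∈ B) = ∫_B P(U₁ ∈ A, V ≤ p(x,z)) dμ(x,z), and P(U ∈ A, D = 0, (X,Z) ∈ B) = ∫_B P(U₀ ∈ A, V > p(x,z)) dμ(x,z). In particular the conditional distribution of (U, D) given (X, Z) depends on (X, Z) only through the propensity score p(X,Z). -/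
open MeasureTheory ProbabilityTheory

/-- Proposition 2(i) (index sufficiency), in unconditional integral form: under strong
exogeneity `(U₁, U₀, V) ⊥ (X, Z)`, with `D = 𝟙{V ≤ p(X,Z)}` and `U = D·U₁ + (1−D)·U₀`,
the joint subprobabilities of `(U ∈ A, D = d, (X,Z) ∈ B)` are given by integrating
`P(U₁ ∈ A, V ≤ p(x,z))` (resp. `P(U₀ ∈ A, V > p(x,z))`) over `B` against the law of
`(X,Z)`; hence the conditional distribution of `(U, D)` given `(X,Z)` depends on `(X,Z)`
only through the propensity score `p(X,Z)`. -/
theorem stmt_0 {Ω : Type*} [MeasurableSpace Ω] (P : Measure Ω) [IsProbabilityMeasure P]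
    {k m : ℕ} (U₁ U₀ V : Ω → ℝ) (X : Ω → (Fin k → ℝ)) (Z : Ω → (Fin m → ℝ))
    (p : (Fin k → ℝ) × (Fin m → ℝ) → ℝ)
    (hU₁ : Measurable U₁) (hU₀ : Measurable U₀) (hV : Measurable V)
    (hX : Measurable X) (hZ : Measurable Z) (hp : Measurable p)
    (hindep : IndepFun (fun ω => (U₁ ω, U₀ ω, V ω)) (fun ω => (X ω, Z ω)) P)
    (D U : Ω → ℝ)
    (hD : D = fun ω => if V ω ≤ p (X ω, Z ω) then 1 else 0)
    (hU : U = fun ω => D ω * U₁ ω + (1 - D ω) * U₀ ω)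
    (A : Set ℝ) (hA : MeasurableSet A)
    (B : Set ((Fin k → ℝ) × (Fin m → ℝ))) (hB : MeasurableSet B) :
    P {ω | U ω ∈ A ∧ D ω = 1 ∧ (X ω, Z ω) ∈ B}
      = ∫⁻ xz in B, P {ω | U₁ ω ∈ A ∧ V ω ≤ p xz}
          ∂(Measure.map (fun ω => (X ω, Z ω)) P)
    ∧ P {ω | U ω ∈ A ∧ D ω = 0 ∧ (X ω, Z ω) ∈ B}
      = ∫⁻ xz in B, P {ω | U₀ ω ∈ A ∧ p xz < V ω}
          ∂(Measure.map (fun ω => (X ω, Z ω)) P) := by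
  subst hD hU
  set W : Ω → ℝ × ℝ × ℝ := fun ω => (U₁ ω, U₀ ω, V ω) with hWdef
  set T : Ω → (Fin k → ℝ) × (Fin m → ℝ) := fun ω => (X ω, Z ω) with hTdef
  have hW : Measurable W := (hU₁.prodMk (hU₀.prodMk hV))
  have hT : Measurable T := hX.prodMk hZ
  have hmap : Measure.map (fun ω => (W ω, T ω)) P
      = (Measure.map W P).prod (Measure.map T P) :=
    (indepFun_iff_map_prod_eq_prod_map_map hW.aemeasurable hT.aemeasurable).mp hindep
  have hjoint : Measurable (fun ω => (W ω, T ω)) := hW.prodMk hT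
  constructor
  · -- D = 1 case
    have hset : {ω | (if V ω ≤ p (X ω, Z ω) then (1:ℝ) else 0) * U₁ ω
          + (1 - (if V ω ≤ p (X ω, Z ω) then (1:ℝ) else 0)) * U₀ ω ∈ A
          ∧ (if V ω ≤ p (X ω, Z ω) then (1:ℝ) else 0) = 1 ∧ (X ω, Z ω) ∈ B}
        = (fun ω => (W ω, T ω)) ⁻¹'
          {wt : (ℝ × ℝ × ℝ) × ((Fin k → ℝ) × (Fin m → ℝ)) |
            wt.1.1 ∈ A ∧ wt.1.2.2 ≤ p wt.2 ∧ wt.2 ∈ B} := by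
      ext ω
      by_cases h : V ω ≤ p (X ω, Z ω) <;> simp [h, W, T]
    have hS : MeasurableSet {wt : (ℝ × ℝ × ℝ) × ((Fin k → ℝ) × (Fin m → ℝ)) |
        wt.1.1 ∈ A ∧ wt.1.2.2 ≤ p wt.2 ∧ wt.2 ∈ B} := by
      refine (hA.preimage (measurable_fst.fst)).inter
        ((measurableSet_le measurable_fst.snd.snd (hp.comp measurable_snd)).inter
          (hB.preimage measurable_snd))
    rw [hset, ← Measure.map_apply hjoint hS, hmap,
      Measure.prod_apply_symm hS]
    have : ∀ xz, (Measure.map W P) ((fun w => (w, xz)) ⁻¹'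
        {wt : (ℝ × ℝ × ℝ) × ((Fin k → ℝ) × (Fin m → ℝ)) |
          wt.1.1 ∈ A ∧ wt.1.2.2 ≤ p wt.2 ∧ wt.2 ∈ B})
        = B.indicator (fun xz => P {ω | U₁ ω ∈ A ∧ V ω ≤ p xz}) xz := by
      intro xz
      by_cases hxz : xz ∈ B
      · have : ((fun w : ℝ × ℝ × ℝ => (w, xz)) ⁻¹'
            {wt : (ℝ × ℝ × ℝ) × ((Fin k → ℝ) × (Fin m → ℝ)) |
              wt.1.1 ∈ A ∧ wt.1.2.2 ≤ p wt.2 ∧ wt.2 ∈ B})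
            = {w : ℝ × ℝ × ℝ | w.1 ∈ A ∧ w.2.2 ≤ p xz} := by
          ext w; simp [hxz]
        rw [this, Measure.map_apply hW
          (show MeasurableSet {w : ℝ × ℝ × ℝ | w.1 ∈ A ∧ w.2.2 ≤ p xz} from
            (hA.preimage measurable_fst).inter
              (measurableSet_le measurable_snd.snd measurable_const)),
          Set.indicator_of_mem hxz]
        rfl
      · have : ((fun w : ℝ × ℝ × ℝ => (w, xz)) ⁻¹'
            {wt : (ℝ × ℝ × ℝ) × ((Fin k → ℝ) × (Fin m → ℝ)) |
              wt.1.1 ∈ A ∧ wt.1.2.2 ≤ p wt.2 ∧ wt.2 ∈ B}) = ∅ := by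
          ext w; simp [hxz]
        rw [this, Set.indicator_of_notMem hxz]; simp
    simp only [this]
    rw [lintegral_indicator hB]
  · -- D = 0 case
    have hset : {ω | (if V ω ≤ p (X ω, Z ω) then (1:ℝ) else 0) * U₁ ω
          + (1 - (if V ω ≤ p (X ω, Z ω) then (1:ℝ) else 0)) * U₀ ω ∈ A
          ∧ (if V ω ≤ p (X ω, Z ω) then (1:ℝ) else 0) = 0 ∧ (X ω, Z ω) ∈ B}
        = (fun ω => (W ω, T ω)) ⁻¹'
          {wt : (ℝ × ℝ × ℝ) × ((Fin k → ℝ) × (Fin m → ℝ)) |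
            wt.1.2.1 ∈ A ∧ p wt.2 < wt.1.2.2 ∧ wt.2 ∈ B} := by
      ext ω
      by_cases h : V ω ≤ p (X ω, Z ω) <;> simp [h, W, T, not_le.mp, not_le]
    have hS : MeasurableSet {wt : (ℝ × ℝ × ℝ) × ((Fin k → ℝ) × (Fin m → ℝ)) |
        wt.1.2.1 ∈ A ∧ p wt.2 < wt.1.2.2 ∧ wt.2 ∈ B} := by
      refine (hA.preimage (measurable_fst.snd.fst)).inter
        ((measurableSet_lt (hp.comp measurable_snd) measurable_fst.snd.snd).inter
          (hB.preimage measurable_snd))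
    rw [hset, ← Measure.map_apply hjoint hS, hmap,
      Measure.prod_apply_symm hS]
    have : ∀ xz, (Measure.map W P) ((fun w => (w, xz)) ⁻¹'
        {wt : (ℝ × ℝ × ℝ) × ((Fin k → ℝ) × (Fin m → ℝ)) |
          wt.1.2.1 ∈ A ∧ p wt.2 < wt.1.2.2 ∧ wt.2 ∈ B})
        = B.indicator (fun xz => P {ω | U₀ ω ∈ A ∧ p xz < V ω}) xz := by
      intro xz
      by_cases hxz : xz ∈ B
      · have : ((fun w : ℝ × ℝ × ℝ => (w, xz)) ⁻¹'
            {wt : (ℝ × ℝ × ℝ) × ((Fin k → ℝ) × (Fin m → ℝ)) |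
              wt.1.2.1 ∈ A ∧ p wt.2 < wt.1.2.2 ∧ wt.2 ∈ B})
            = {w : ℝ × ℝ × ℝ | w.2.1 ∈ A ∧ p xz < w.2.2} := by
          ext w; simp [hxz]
        rw [this, Measure.map_apply hW
          (show MeasurableSet {w : ℝ × ℝ × ℝ | w.2.1 ∈ A ∧ p xz < w.2.2} from
            (hA.preimage measurable_snd.fst).inter
              (measurableSet_lt measurable_const measurable_snd.snd)),
          Set.indicator_of_mem hxz]
        rfl
      · have : ((fun w : ℝ × ℝ × ℝ => (w, xz)) ⁻¹'
            {wt : (ℝ × ℝ × ℝ) × ((Fin k → ℝ) × (Fin m → ℝ)) |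
              wt.1.2.1 ∈ A ∧ p wt.2 < wt.1.2.2 ∧ wt.2 ∈ B}) = ∅ := by
          ext w; simp [hxz]
        rw [this, Set.indicator_of_notMem hxz]; simp
    simp only [this]
    rw [lintegral_indicator hB]
end

section
/- Let (Ω, ℱ, P) be a probability space, Y₁, Y₀, V : Ω → ℝ random variables, X : Ω → ℝ^k and Z : Ω → ℝ^m random vectors, and p : ℝ^k × ℝ^m → ℝ a measurable function. Assume the triple (Y₁, Y₀, V) is conditionally independent of Z given the σ-algebra σ(X). Define D := 𝟙{V ≤ p(X,Z)} and Y := D·Y₁ + (1−D)·Y₀. Then for every Borel set A ⊆ ℝ there exists a measurable function h_A : ℝ^k × ℝ → [0,1] such that: (i) E[𝟙{Y ∈ A}·D | σ(X,Z)] = h_A(X, p(X,Z)) almost surely, so the conditional probability of the event (Y ∈ A, D = 1) given (X,Z) depends on Z only through the value of the propensity score p(X,Z); and (ii) for every x ∈ ℝ^k, the map t ↦ h_A(x, t) is nondecreasing. One may take h_A(x, t) = κ(x)(A × (−∞, t]), where κ is a regular conditional distribution of (Y₁, V) given X. -/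
open MeasureTheory ProbabilityTheory

/-- Under conditional independence of `W` and `Z` given `σ(X)`, the law of `((X,Z), W)` is the
composition of the law of `(X,Z)` with the kernel `condDistrib W X P` precomposed with `fst`. -/
lemma stmt2_key {Ω : Type*} [MeasurableSpace Ω] [StandardBorelSpace Ω] [Nonempty Ω]
    (P : Measure Ω) [IsProbabilityMeasure P] {k m : ℕ}
    (W : Ω → ℝ × ℝ) (X : Ω → (Fin k → ℝ)) (Z : Ω → (Fin m → ℝ))
    (hW : Measurable W) (hX : Measurable X) (hZ : Measurable Z)
    (hci : CondIndepFun (MeasurableSpace.comap X inferInstance) hX.comap_le W Z P) :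
    P.map (fun ω => ((X ω, Z ω), W ω)) =
      (P.map (fun ω => (X ω, Z ω))) ⊗ₘ ((condDistrib W X P).comap Prod.fst measurable_fst) := by
  set κ := condDistrib W X P with hκ
  set η := κ.comap (Prod.fst : (Fin k → ℝ) × (Fin m → ℝ) → (Fin k → ℝ)) measurable_fst with hη
  have hXZ : Measurable fun ω => (X ω, Z ω) := hX.prodMk hZ
  have hpair : Measurable fun ω => ((X ω, Z ω), W ω) := hXZ.prodMk hW
  have h1 : IsProbabilityMeasure (P.map (fun ω => ((X ω, Z ω), W ω))) :=
    Measure.isProbabilityMeasure_map hpair.aemeasurable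
  have h2 : IsProbabilityMeasure (P.map (fun ω => (X ω, Z ω))) :=
    Measure.isProbabilityMeasure_map hXZ.aemeasurable
  -- π-system of rectangles
  set C₁ : Set (Set ((Fin k → ℝ) × (Fin m → ℝ))) :=
    Set.image2 (· ×ˢ ·) { s : Set (Fin k → ℝ) | MeasurableSet s }
      { s : Set (Fin m → ℝ) | MeasurableSet s } with hC₁
  set C : Set (Set (((Fin k → ℝ) × (Fin m → ℝ)) × (ℝ × ℝ))) :=
    Set.image2 (· ×ˢ ·) C₁ { s : Set (ℝ × ℝ) | MeasurableSet s } with hC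
  have hgen : (inferInstance : MeasurableSpace (((Fin k → ℝ) × (Fin m → ℝ)) × (ℝ × ℝ)))
      = MeasurableSpace.generateFrom C := by
    refine (generateFrom_eq_prod ?_ ?_ ?_ ?_).symm
    · exact generateFrom_prod
    · exact MeasurableSpace.generateFrom_measurableSet
    · exact (isCountablySpanning_measurableSet).prod (isCountablySpanning_measurableSet)
    · exact isCountablySpanning_measurableSet
  have hpi : IsPiSystem C :=
    (MeasurableSpace.isPiSystem_measurableSet.prod MeasurableSpace.isPiSystem_measurableSet).prod MeasurableSpace.isPiSystem_measurableSet
  refine MeasureTheory.ext_of_generate_finite C hgen hpi ?_ ?_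
  swap
  · simp
  rintro _ ⟨_, ⟨B₁, hB₁, B₂, hB₂, rfl⟩, T, hT, rfl⟩
  have hB₁' : MeasurableSet B₁ := hB₁
  have hB₂' : MeasurableSet B₂ := hB₂
  have hT' : MeasurableSet T := hT
  rw [Measure.map_apply hpair ((hB₁'.prod hB₂').prod hT'),
    Measure.compProd_apply_prod (hB₁'.prod hB₂') hT',
    setLIntegral_map (hB₁'.prod hB₂') (Kernel.measurable_coe η hT') hXZ]
  simp only [hη, Kernel.comap_apply]
  set s₁ := X ⁻¹' B₁ with hs₁def
  set s₂ := Z ⁻¹' B₂ with hs₂def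
  set sT := W ⁻¹' T with hsTdef
  have hpre1 : (fun ω => ((X ω, Z ω), W ω)) ⁻¹' ((B₁ ×ˢ B₂) ×ˢ T) = (s₁ ∩ s₂) ∩ sT := by
    ext ω; simp [Set.mem_prod, hs₁def, hs₂def, hsTdef, Set.mem_inter_iff, and_assoc]
  have hpre2 : (fun ω => (X ω, Z ω)) ⁻¹' (B₁ ×ˢ B₂) = s₁ ∩ s₂ := by
    ext ω; simp [Set.mem_prod, hs₁def, hs₂def]
  rw [hpre1, hpre2]
  have hs₁ : MeasurableSet s₁ := hX hB₁'
  have hs₂ : MeasurableSet s₂ := hZ hB₂'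
  have hsT : MeasurableSet sT := hW hT'
  set g₁ : Ω → ℝ := fun ω => (κ (X ω) T).toReal with hg₁def
  have hg₁m : Measurable[MeasurableSpace.comap X inferInstance] g₁ := by
    exact Measurable.ennreal_toReal (measurable_condDistrib (μ := P) hT')
  have hg₁bd : ∀ ω, ‖g₁ ω‖ ≤ 1 := by
    intro ω
    rw [Real.norm_eq_abs, abs_of_nonneg ENNReal.toReal_nonneg]
    simpa using ENNReal.toReal_mono (by simp) (prob_le_one (μ := κ (X ω)) (s := T))
  have hne1 : P ((s₁ ∩ s₂) ∩ sT) ≠ ⊤ := measure_ne_top _ _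
  have hne2 : ∫⁻ ω in s₁ ∩ s₂, κ (X ω) T ∂P ≠ ⊤ := by
    have hle : ∫⁻ ω in s₁ ∩ s₂, κ (X ω) T ∂P ≤ ∫⁻ _ in s₁ ∩ s₂, 1 ∂P :=
      lintegral_mono fun ω => prob_le_one
    rw [setLIntegral_one] at hle
    exact ne_of_lt (lt_of_le_of_lt hle (measure_lt_top _ _))
  rw [← ENNReal.toReal_eq_toReal_iff' hne1 hne2]
  have hκXm : Measurable[MeasurableSpace.comap X inferInstance] fun ω => κ (X ω) T :=
    measurable_condDistrib (μ := P) hT'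
  have hRHS : (∫⁻ ω in s₁ ∩ s₂, κ (X ω) T ∂P).toReal = ∫ ω in s₁ ∩ s₂, g₁ ω ∂P :=
    (integral_toReal ((hκXm.mono hX.comap_le le_rfl).aemeasurable.restrict)
      (Filter.Eventually.of_forall fun ω => measure_lt_top _ _)).symm
  rw [hRHS]
  set ζ : Ω → ℝ := s₂.indicator (fun _ => (1:ℝ)) with hζdef
  have hζint : Integrable ζ P := (integrable_const 1).indicator hs₂
  have hcond := (condIndepFun_iff_condExp_inter_preimage_eq_mul hW hZ).mp hci T B₂ hT' hB₂'
  have hcd := condDistrib_ae_eq_condExp (μ := P) hX hW hT'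
  set f : Ω → ℝ := s₁.indicator g₁ with hfdef
  have hf_sm : StronglyMeasurable[MeasurableSpace.comap X inferInstance] f :=
    Measurable.stronglyMeasurable (hg₁m.indicator ⟨B₁, hB₁', rfl⟩)
  have hf_bd : ∀ ω, ‖f ω‖ ≤ 1 := by
    intro ω
    by_cases hω : ω ∈ s₁
    · rw [hfdef, Set.indicator_of_mem hω]
      exact hg₁bd ω
    · rw [hfdef, Set.indicator_of_notMem hω]
      simp
  have hmul := condExp_stronglyMeasurable_mul_of_bound hX.comap_le hf_sm hζint 1
    (Filter.Eventually.of_forall hf_bd)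
  have hfζint : Integrable (f * ζ) P :=
    hζint.bdd_mul (hf_sm.mono hX.comap_le).aestronglyMeasurable (Filter.Eventually.of_forall hf_bd)
  have step1 : (P (s₁ ∩ s₂ ∩ sT)).toReal
      = ∫ ω in s₁, (sT ∩ s₂).indicator (fun _ => (1:ℝ)) ω ∂P := by
    rw [integral_indicator_const (1:ℝ) (hsT.inter hs₂), measureReal_restrict_apply (hsT.inter hs₂), measureReal_def,
      smul_eq_mul, mul_one]
    have hset : sT ∩ s₂ ∩ s₁ = s₁ ∩ s₂ ∩ sT := by
      ext ω
      simp only [Set.mem_inter_iff]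
      tauto
    rw [hset]
  have step2 : ∫ ω in s₁, (sT ∩ s₂).indicator (fun _ => (1:ℝ)) ω ∂P
      = ∫ ω in s₁, (P⟦sT ∩ s₂ | MeasurableSpace.comap X inferInstance⟧) ω ∂P :=
    (setIntegral_condExp hX.comap_le ((integrable_const (1:ℝ)).indicator (hsT.inter hs₂))
      ⟨B₁, hB₁', rfl⟩).symm
  have step3 : ∫ ω in s₁, (P⟦sT ∩ s₂ | MeasurableSpace.comap X inferInstance⟧) ω ∂P
      = ∫ ω in s₁, g₁ ω * (P⟦s₂ | MeasurableSpace.comap X inferInstance⟧) ω ∂P := by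
    refine setIntegral_congr_ae hs₁ ?_
    filter_upwards [hcond, hcd] with ω h1 h2 _
    rw [h1, ← h2, measureReal_def]
  have step4 : ∫ ω in s₁, g₁ ω * (P⟦s₂ | MeasurableSpace.comap X inferInstance⟧) ω ∂P = ∫ ω, (f * (P[ζ | MeasurableSpace.comap X inferInstance])) ω ∂P := by
    rw [← integral_indicator hs₁]
    congr 1
    funext ω
    by_cases hω : ω ∈ s₁ <;> simp [hfdef, hζdef, Set.indicator_apply, hω]
  have step5 : ∫ ω, (f * (P[ζ | MeasurableSpace.comap X inferInstance])) ω ∂P = ∫ ω, (f * ζ) ω ∂P := by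
    rw [← integral_congr_ae hmul, integral_condExp hX.comap_le]
  have step6 : ∫ ω, (f * ζ) ω ∂P = ∫ ω in s₁ ∩ s₂, g₁ ω ∂P := by
    rw [← integral_indicator (hs₁.inter hs₂)]
    congr 1
    funext ω
    by_cases h1 : ω ∈ s₁ <;> by_cases h2 : ω ∈ s₂ <;>
      simp [hfdef, hζdef, Set.indicator_apply, h1, h2]
  rw [step1, step2, step3, step4, step5, step6]

/-- Proposition 1 of the paper: under conditional independence of `(Y₁, Y₀, V)` and `Z`
given `σ(X)`, with `D = 𝟙{V ≤ p(X,Z)}` and `Y = D·Y₁ + (1−D)·Y₀`, for every Borel set `A`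
there is a measurable `h : ℝ^k × ℝ → [0,1]` such that the conditional probability of
`(Y ∈ A, D = 1)` given `σ(X,Z)` equals `h (X, p(X,Z))` a.s. (index sufficiency), and
`t ↦ h (x, t)` is nondecreasing for every `x` (nesting). -/
theorem stmt_2 {Ω : Type*} [MeasurableSpace Ω] [StandardBorelSpace Ω] [Nonempty Ω]
    (P : Measure Ω) [IsProbabilityMeasure P]
    {k m : ℕ} (Y₁ Y₀ V : Ω → ℝ) (X : Ω → (Fin k → ℝ)) (Z : Ω → (Fin m → ℝ))
    (p : (Fin k → ℝ) × (Fin m → ℝ) → ℝ)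
    (hY₁ : Measurable Y₁) (hY₀ : Measurable Y₀) (hV : Measurable V)
    (hX : Measurable X) (hZ : Measurable Z) (hp : Measurable p)
    (hci : CondIndepFun (MeasurableSpace.comap X inferInstance) hX.comap_le
      (fun ω => (Y₁ ω, Y₀ ω, V ω)) Z P)
    (D Y : Ω → ℝ)
    (hD : D = fun ω => if V ω ≤ p (X ω, Z ω) then 1 else 0)
    (hY : Y = fun ω => D ω * Y₁ ω + (1 - D ω) * Y₀ ω)
    (A : Set ℝ) (hA : MeasurableSet A) :
    ∃ h : (Fin k → ℝ) × ℝ → ℝ, Measurable h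
      ∧ (∀ x t, h (x, t) ∈ Set.Icc (0:ℝ) 1)
      ∧ ((P[fun ω => Set.indicator A (fun _ => (1:ℝ)) (Y ω) * D ω |
            MeasurableSpace.comap (fun ω => (X ω, Z ω)) inferInstance])
          =ᵐ[P] fun ω => h (X ω, p (X ω, Z ω)))
      ∧ (∀ x, Monotone fun t => h (x, t)) := by
  classical
  set W : Ω → ℝ × ℝ := fun ω => (Y₁ ω, V ω) with hWdef
  have hW : Measurable W := hY₁.prodMk hV
  have hciW : CondIndepFun (MeasurableSpace.comap X inferInstance) hX.comap_le W Z P := by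
    have := hci.comp (φ := fun q : ℝ × ℝ × ℝ => (q.1, q.2.2)) (ψ := id)
      (measurable_fst.prodMk measurable_snd.snd) measurable_id
    exact this
  have hXZ : Measurable fun ω => (X ω, Z ω) := hX.prodMk hZ
  have hpair : Measurable fun ω => ((X ω, Z ω), W ω) := hXZ.prodMk hW
  set κ := condDistrib W X P with hκdef
  -- measurability of the kernel applied to the moving set
  have hMeasK : Measurable fun q : (Fin k → ℝ) × ℝ => κ q.1 (A ×ˢ Set.Iic q.2) := by
    have hS : MeasurableSet {q : ((Fin k → ℝ) × ℝ) × (ℝ × ℝ) | q.2.1 ∈ A ∧ q.2.2 ≤ q.1.2} :=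
      (measurable_snd.fst hA).inter (measurableSet_le measurable_snd.snd measurable_fst.snd)
    have hm := Kernel.measurable_kernel_prodMk_left
      (κ := κ.comap (Prod.fst : (Fin k → ℝ) × ℝ → (Fin k → ℝ)) measurable_fst) hS
    have heq : ∀ q : (Fin k → ℝ) × ℝ,
        (Prod.mk q ⁻¹' {q : ((Fin k → ℝ) × ℝ) × (ℝ × ℝ) | q.2.1 ∈ A ∧ q.2.2 ≤ q.1.2})
          = A ×ˢ Set.Iic q.2 := by
      intro q; rfl
    simpa only [Kernel.comap_apply, heq] using hm
  set h : (Fin k → ℝ) × ℝ → ℝ := fun q => (κ q.1 (A ×ˢ Set.Iic q.2)).toReal with hhdef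
  have hhm : Measurable h := hMeasK.ennreal_toReal
  refine ⟨h, hhm, ?_, ?_, ?_⟩
  · intro x t
    refine ⟨ENNReal.toReal_nonneg, ?_⟩
    simpa using ENNReal.toReal_mono (by simp) (prob_le_one (μ := κ x) (s := A ×ˢ Set.Iic t))
  · -- the conditional expectation property
    set G : Ω → ℝ := fun ω => h (X ω, p (X ω, Z ω)) with hGdef
    set E : Set Ω := {ω | Y₁ ω ∈ A ∧ V ω ≤ p (X ω, Z ω)} with hEdef
    have hE : MeasurableSet E := (hY₁ hA).inter (measurableSet_le hV (hp.comp hXZ))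
    have hFE : (fun ω => Set.indicator A (fun _ => (1:ℝ)) (Y ω) * D ω)
        = E.indicator (fun _ => (1:ℝ)) := by
      funext ω
      by_cases hv : V ω ≤ p (X ω, Z ω)
      · have hDω : D ω = 1 := by rw [hD]; simp [hv]
        have hYω : Y ω = Y₁ ω := by simp [hY, hDω]
        by_cases hy : Y₁ ω ∈ A
        · rw [Set.indicator_of_mem (show ω ∈ E from ⟨hy, hv⟩), hYω,
            Set.indicator_of_mem hy, hDω, mul_one]
        · rw [Set.indicator_of_notMem (show ω ∉ E from fun hmem => hy hmem.1), hYω,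
            Set.indicator_of_notMem hy, zero_mul]
      · have hDω : D ω = 0 := by rw [hD]; simp [hv]
        rw [Set.indicator_of_notMem (show ω ∉ E from fun hmem => hv hmem.2), hDω, mul_zero]
    have hGmeas : Measurable G := hhm.comp (hX.prodMk (hp.comp hXZ))
    have hGbd : ∀ ω, ‖G ω‖ ≤ 1 := by
      intro ω
      rw [Real.norm_eq_abs, abs_of_nonneg ENNReal.toReal_nonneg]
      simpa using ENNReal.toReal_mono (by simp) (prob_le_one (μ := κ (X ω)))
    have hGint : Integrable G P :=
      Integrable.mono' (integrable_const (1:ℝ)) hGmeas.aestronglyMeasurable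
        (Filter.Eventually.of_forall hGbd)
    rw [hFE]
    refine (ae_eq_condExp_of_forall_setIntegral_eq hXZ.comap_le
      ((integrable_const (1:ℝ)).indicator hE) (fun s _ _ => hGint.integrableOn) ?_ ?_).symm
    · -- set integral equality
      rintro _ ⟨B, hB, rfl⟩ _
      set s := (fun ω => (X ω, Z ω)) ⁻¹' B with hsdef
      have hsm : MeasurableSet s := hXZ hB
      have hkey := stmt2_key P W X Z hW hX hZ hciW
      set η := κ.comap (Prod.fst : (Fin k → ℝ) × (Fin m → ℝ) → (Fin k → ℝ))
        measurable_fst with hηdef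
      set U : Set (((Fin k → ℝ) × (Fin m → ℝ)) × (ℝ × ℝ)) :=
        {q | q.1 ∈ B ∧ q.2.1 ∈ A ∧ q.2.2 ≤ p q.1} with hUdef
      have hU : MeasurableSet U :=
        (measurable_fst hB).inter ((measurable_snd.fst hA).inter
          (measurableSet_le measurable_snd.snd (hp.comp measurable_fst)))
      have hpreU : (fun ω => ((X ω, Z ω), W ω)) ⁻¹' U = E ∩ s := by
        ext ω
        simp only [hUdef, hEdef, hsdef, Set.mem_preimage, Set.mem_setOf_eq,
          Set.mem_inter_iff, hWdef]
        tauto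
      have hfiber : ∀ c : (Fin k → ℝ) × (Fin m → ℝ), η c (Prod.mk c ⁻¹' U)
          = B.indicator (fun c => κ c.1 (A ×ˢ Set.Iic (p c))) c := by
        intro c
        by_cases hc : c ∈ B
        · rw [Set.indicator_of_mem hc, hηdef, Kernel.comap_apply]
          congr 1
          ext w
          simp [hUdef, hc, Set.mem_prod]
        · rw [Set.indicator_of_notMem hc]
          have : Prod.mk c ⁻¹' U = (∅ : Set (ℝ × ℝ)) := by
            ext w; simp [hUdef, hc]
          rw [this]
          simp
      have hmeasBind : Measurable fun c : (Fin k → ℝ) × (Fin m → ℝ) =>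
          B.indicator (fun c => κ c.1 (A ×ˢ Set.Iic (p c))) c :=
        ((hMeasK.comp (measurable_fst.prodMk hp))).indicator hB
      have hℓ : P (E ∩ s) = ∫⁻ ω in s, κ (X ω) (A ×ˢ Set.Iic (p (X ω, Z ω))) ∂P := by
        rw [← hpreU, ← Measure.map_apply hpair hU, hkey, Measure.compProd_apply hU]
        calc ∫⁻ c, η c (Prod.mk c ⁻¹' U) ∂(P.map fun ω => (X ω, Z ω))
            = ∫⁻ c, B.indicator (fun c => κ c.1 (A ×ˢ Set.Iic (p c))) c
                ∂(P.map fun ω => (X ω, Z ω)) := by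
              exact lintegral_congr hfiber
          _ = ∫⁻ ω, B.indicator (fun c => κ c.1 (A ×ˢ Set.Iic (p c))) (X ω, Z ω) ∂P :=
              lintegral_map hmeasBind hXZ
          _ = ∫⁻ ω, s.indicator (fun ω => κ (X ω) (A ×ˢ Set.Iic (p (X ω, Z ω)))) ω ∂P := by
              refine lintegral_congr fun ω => ?_
              by_cases hω : (X ω, Z ω) ∈ B
              · rw [Set.indicator_of_mem hω, Set.indicator_of_mem (show ω ∈ s from hω)]
              · rw [Set.indicator_of_notMem hω, Set.indicator_of_notMem
                  (show ω ∉ s from hω)]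
          _ = ∫⁻ ω in s, κ (X ω) (A ×ˢ Set.Iic (p (X ω, Z ω))) ∂P :=
              lintegral_indicator hsm _
      have hGtoReal : ∫ ω in s, G ω ∂P
          = (∫⁻ ω in s, κ (X ω) (A ×ˢ Set.Iic (p (X ω, Z ω))) ∂P).toReal :=
        integral_toReal ((hMeasK.comp (hX.prodMk (hp.comp hXZ))).aemeasurable.restrict)
          (Filter.Eventually.of_forall fun ω => measure_lt_top _ _)
      rw [hGtoReal, ← hℓ, integral_indicator_const (1:ℝ) hE, measureReal_restrict_apply hE, measureReal_def,
        smul_eq_mul, mul_one]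
    · -- G is mXZ-a.e. strongly measurable
      have h1 : Measurable[MeasurableSpace.comap (fun ω => (X ω, Z ω)) inferInstance]
          fun ω => (X ω, Z ω) := Measurable.of_comap_le le_rfl
      have hGm' : Measurable[MeasurableSpace.comap (fun ω => (X ω, Z ω)) inferInstance] G :=
        (hhm.comp (measurable_fst.prodMk hp)).comp h1
      exact (Measurable.stronglyMeasurable hGm').aestronglyMeasurable
  · intro x s t hst
    exact ENNReal.toReal_mono (measure_ne_top _ _)
      (measure_mono (Set.prod_mono subset_rfl (Set.Iic_subset_Iic.2 hst)))
end

section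
/- Let w⁻, w⁺, v₀, v₁ ∈ [0,1] and let F⁻₀, F⁻₁, F⁺₀, F⁺₁, G⁻₀, G⁻₁, G⁺₀, G⁺₁ be real numbers satisfying: G⁻₀ = F⁻₀ and G⁺₁ = F⁺₁ (consequences of the trimming rule); G⁺₀ ≥ G⁻₀ and G⁺₁ ≥ G⁻₁ (conditional nesting on the trimmed sample); and F⁻₀ ≥ F⁻₁ and F⁺₀ ≥ F⁺₁ (the ordering derived in the paper from positivity of the coarsened violation together with the labeling condition and conditional nesting). Then the distilled nesting violation dominates the coarsened one: Dv := v₀·G⁻₀ + (1−v₀)·G⁺₀ − v₁·G⁻₁ − (1−v₁)·G⁺₁ ≥ N := (1−w⁻)·F⁻₀ + w⁻·F⁻₁ − (1−w⁺)·F⁺₀ − w⁺·F⁺₁. In particular, whenever N > 0 one has Dv ≥ N > 0. -/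
/-- Statement 1 of Proposition 4 (algebraic core): the distilled nesting violation dominates
the coarsened propensity score nesting violation. -/
theorem stmt_8 (wm wp v0 v1 Fm0 Fm1 Fp0 Fp1 Gm0 Gm1 Gp0 Gp1 : ℝ)
    (hwm : wm ∈ Set.Icc (0:ℝ) 1) (hwp : wp ∈ Set.Icc (0:ℝ) 1)
    (hv0 : v0 ∈ Set.Icc (0:ℝ) 1) (hv1 : v1 ∈ Set.Icc (0:ℝ) 1)
    (hGm0 : Gm0 = Fm0) (hGp1 : Gp1 = Fp1)
    (hG0 : Gp0 ≥ Gm0) (hG1 : Gp1 ≥ Gm1)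
    (hF0 : Fm0 ≥ Fm1) (hF1 : Fp0 ≥ Fp1) :
    v0 * Gm0 + (1 - v0) * Gp0 - v1 * Gm1 - (1 - v1) * Gp1
      ≥ (1 - wm) * Fm0 + wm * Fm1 - (1 - wp) * Fp0 - wp * Fp1
    ∧ ((1 - wm) * Fm0 + wm * Fm1 - (1 - wp) * Fp0 - wp * Fp1 > 0 →
        v0 * Gm0 + (1 - v0) * Gp0 - v1 * Gm1 - (1 - v1) * Gp1 > 0) := by
  obtain ⟨hwm0, hwm1⟩ := hwm
  obtain ⟨hwp0, hwp1⟩ := hwp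
  obtain ⟨hv00, hv01⟩ := hv0
  obtain ⟨hv10, hv11⟩ := hv1
  have key : v0 * Gm0 + (1 - v0) * Gp0 - v1 * Gm1 - (1 - v1) * Gp1
      ≥ (1 - wm) * Fm0 + wm * Fm1 - (1 - wp) * Fp0 - wp * Fp1 := by
    nlinarith [mul_nonneg (by linarith : (0:ℝ) ≤ 1 - v0) (by linarith : (0:ℝ) ≤ Gp0 - Gm0),
      mul_nonneg hv10 (by linarith : (0:ℝ) ≤ Gp1 - Gm1),
      mul_nonneg hwm0 (by linarith : (0:ℝ) ≤ Fm0 - Fm1),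
      mul_nonneg (by linarith : (0:ℝ) ≤ 1 - wp) (by linarith : (0:ℝ) ≤ Fp0 - Fp1)]
  exact ⟨key, fun h => lt_of_lt_of_le h key⟩
end

section
/- Let K ≥ 1, let δ₀, δ₁ ∈ ℝ^K satisfy δ₁'δ₁ = δ₀'δ₀ = s > 0, and set ρ := δ₀'δ₁/s. Let Ψ₁, Ψ₂, Ψ₃ be symmetric K×K real matrices for which there exist real numbers c₀, c₁, d₀, d₁, e₀, e₁ with Ψ₁δ₁ = c₁δ₁ + c₀δ₀, Ψ₁δ₀ = d₀δ₁ + d₁δ₀, Ψ₃δ₁ = d₁δ₁ + d₀δ₀, Ψ₃δ₀ = c₀δ₁ + c₁δ₀, Ψ₂δ₁ = e₁δ₁ + e₀δ₀, and Ψ₂δ₀ = e₀δ₁ + e₁δ₀. Suppose the 2K×2K block matrix M := [[Ψ₁, Ψ₂], [Ψ₂, Ψ₃]] is invertible, and write its inverse in blocks as [[Ω₁, Ω₂], [Ω₂', Ω₃]]. Suppose also the 4×4 matrix E := [[E₁, E₂], [P·E₂·P, P·E₁·P]] is invertible, where E₁ = [[c₁, c₀], [e₁, e₀]], E₂ = [[e₁,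 e₀], [d₁, d₀]], and P is the 2×2 swap matrix. Then the following quadratic-form equalities hold: δ₁'Ω₁δ₁ = δ₀'Ω₃δ₀; δ₀'Ω₁δ₀ = δ₁'Ω₃δ₁; δ₀'Ω₁δ₁ = δ₁'Ω₃δ₀; δ₁'Ω₁δ₀ = δ₀'Ω₃δ₁; and δ₁'Ω₂δ₁ = δ₀'Ω₂'δ₀. -/
open Matrix

private lemma det4_aux (a b c d e f g h i j k l m n o p : ℝ) :
    (!![a,b,c,d; e,f,g,h; i,j,k,l; m,n,o,p] : Matrix (Fin 4) (Fin 4) ℝ).det =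
      a*(f*(k*p-l*o)-g*(j*p-l*n)+h*(j*o-k*n))
      - b*(e*(k*p-l*o)-g*(i*p-l*m)+h*(i*o-k*m))
      + c*(e*(j*p-l*n)-f*(i*p-l*m)+h*(i*n-j*m))
      - d*(e*(j*o-k*n)-f*(i*o-k*m)+g*(i*n-j*m)) := by
  rw [Matrix.det_succ_row_zero]
  simp [Fin.sum_univ_succ, Matrix.det_fin_three, Matrix.submatrix]
  simp [Fin.succAbove]
  ring

/-- The 'equalities' lemma of Appendix C: under the push-through relations for the symmetric
blocks `Ψ₁, Ψ₂, Ψ₃` of the invertible second-moment matrix `M`, and invertibility of the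
associated 4×4 coefficient matrix `E`, the quadratic forms of the blocks `Ω₁, Ω₂, Ω₃` of
`M⁻¹` in `δ₀, δ₁` satisfy the stated symmetry equalities. -/
theorem stmt_16 {K : ℕ} (hK : 1 ≤ K) (δ0 δ1 : Fin K → ℝ) (s : ℝ) (hs : 0 < s)
    (hδ1 : δ1 ⬝ᵥ δ1 = s) (hδ0 : δ0 ⬝ᵥ δ0 = s)
    (ρ : ℝ) (hρ : ρ = (δ0 ⬝ᵥ δ1) / s)
    (Ψ1 Ψ2 Ψ3 : Matrix (Fin K) (Fin K) ℝ)
    (hΨ1sym : Ψ1.IsSymm) (hΨ2sym : Ψ2.IsSymm) (hΨ3sym : Ψ3.IsSymm)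
    (c0 c1 d0 d1 e0 e1 : ℝ)
    (h1 : Ψ1 *ᵥ δ1 = c1 • δ1 + c0 • δ0)
    (h2 : Ψ1 *ᵥ δ0 = d0 • δ1 + d1 • δ0)
    (h3 : Ψ3 *ᵥ δ1 = d1 • δ1 + d0 • δ0)
    (h4 : Ψ3 *ᵥ δ0 = c0 • δ1 + c1 • δ0)
    (h5 : Ψ2 *ᵥ δ1 = e1 • δ1 + e0 • δ0)
    (h6 : Ψ2 *ᵥ δ0 = e0 • δ1 + e1 • δ0)
    (M : Matrix (Fin K ⊕ Fin K) (Fin K ⊕ Fin K) ℝ)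
    (hM : M = fromBlocks Ψ1 Ψ2 Ψ2 Ψ3)
    (hMunit : IsUnit M)
    (Pswap : Matrix (Fin 2) (Fin 2) ℝ) (hPswap : Pswap = !![0, 1; 1, 0])
    (E1 E2 : Matrix (Fin 2) (Fin 2) ℝ)
    (hE1 : E1 = !![c1, c0; e1, e0]) (hE2 : E2 = !![e1, e0; d1, d0])
    (hEunit : IsUnit (fromBlocks E1 E2 (Pswap * E2 * Pswap) (Pswap * E1 * Pswap)))
    (Ω1 Ω2 Ω3 : Matrix (Fin K) (Fin K) ℝ)
    (hΩ1 : Ω1 = (M⁻¹).toBlocks₁₁) (hΩ2 : Ω2 = (M⁻¹).toBlocks₁₂)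
    (hΩ3 : Ω3 = (M⁻¹).toBlocks₂₂) :
    δ1 ⬝ᵥ (Ω1 *ᵥ δ1) = δ0 ⬝ᵥ (Ω3 *ᵥ δ0)
    ∧ δ0 ⬝ᵥ (Ω1 *ᵥ δ0) = δ1 ⬝ᵥ (Ω3 *ᵥ δ1)
    ∧ δ0 ⬝ᵥ (Ω1 *ᵥ δ1) = δ1 ⬝ᵥ (Ω3 *ᵥ δ0)
    ∧ δ1 ⬝ᵥ (Ω1 *ᵥ δ0) = δ0 ⬝ᵥ (Ω3 *ᵥ δ1)
    ∧ δ1 ⬝ᵥ (Ω2 *ᵥ δ1) = δ0 ⬝ᵥ (Ω2ᵀ *ᵥ δ0) := by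
  -- The 4×4 coefficient matrix of the push-through relations.
  set A : Matrix (Fin 4) (Fin 4) ℝ :=
    !![c1, d0, e1, e0; c0, d1, e0, e1; e1, e0, d1, c0; e0, e1, d0, c1] with hAdef
  -- A is invertible: its determinant is minus that of the given E block matrix.
  have hAunit : IsUnit A.det := by
    have hF : ((fromBlocks E1 E2 (Pswap * E2 * Pswap) (Pswap * E1 * Pswap)).submatrix
        finSumFinEquiv.symm finSumFinEquiv.symm) =
        (!![c1, c0, e1, e0; e1, e0, d1, d0; d0, d1, e0, e1; e0, e1, c0, c1] :
          Matrix (Fin 4) (Fin 4) ℝ) := by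
      subst hE1 hE2 hPswap
      ext i j
      fin_cases i <;> fin_cases j <;>
        · simp [Matrix.submatrix, finSumFinEquiv, Fin.addCases, Fin.sum_univ_two,
            Matrix.mul_apply, Matrix.fromBlocks]
    have hdF : IsUnit (fromBlocks E1 E2 (Pswap * E2 * Pswap) (Pswap * E1 * Pswap)).det :=
      (isUnit_iff_isUnit_det _).mp hEunit
    rw [← det_submatrix_equiv_self finSumFinEquiv.symm, hF] at hdF
    rw [isUnit_iff_ne_zero] at hdF ⊢
    intro h
    apply hdF
    rw [det4_aux] at h ⊢
    linear_combination -h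
  have hMdet : IsUnit M.det := (isUnit_iff_isUnit_det M).mp hMunit
  -- solving the push-through system
  have key : ∀ t b : Fin 4 → ℝ, A *ᵥ t = b →
      M⁻¹ *ᵥ Sum.elim (b 0 • δ1 + b 1 • δ0) (b 2 • δ1 + b 3 • δ0)
        = Sum.elim (t 0 • δ1 + t 1 • δ0) (t 2 • δ1 + t 3 • δ0) := by
    intro t b hb
    have hb0 := congrFun hb 0
    have hb1 := congrFun hb 1
    have hb2 := congrFun hb 2
    have hb3 := congrFun hb 3
    simp [hAdef, Matrix.mulVec, dotProduct, Fin.sum_univ_four] at hb0 hb1 hb2 hb3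
    have hMw : M *ᵥ Sum.elim (t 0 • δ1 + t 1 • δ0) (t 2 • δ1 + t 3 • δ0)
        = Sum.elim (b 0 • δ1 + b 1 • δ0) (b 2 • δ1 + b 3 • δ0) := by
      rw [hM, fromBlocks_mulVec]
      simp only [Sum.elim_comp_inl, Sum.elim_comp_inr, mulVec_add, mulVec_smul,
        h1, h2, h3, h4, h5, h6]
      funext x
      cases x with
      | inl x =>
        simp only [Sum.elim_inl, Pi.add_apply, Pi.smul_apply, smul_eq_mul]
        linear_combination (δ1 x) * hb0 + (δ0 x) * hb1
      | inr x =>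
        simp only [Sum.elim_inr, Pi.add_apply, Pi.smul_apply, smul_eq_mul]
        linear_combination (δ1 x) * hb2 + (δ0 x) * hb3
    rw [← hMw, mulVec_mulVec, Matrix.nonsing_inv_mul M hMdet, one_mulVec]
  -- coefficient solutions
  set t1 : Fin 4 → ℝ := A⁻¹ *ᵥ ![1, 0, 0, 0] with ht1def
  set t0 : Fin 4 → ℝ := A⁻¹ *ᵥ ![0, 1, 0, 0] with ht0def
  have hAt1 : A *ᵥ t1 = ![1, 0, 0, 0] := by
    rw [ht1def, mulVec_mulVec, Matrix.mul_nonsing_inv A hAunit, one_mulVec]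
  have hAt0 : A *ᵥ t0 = ![0, 1, 0, 0] := by
    rw [ht0def, mulVec_mulVec, Matrix.mul_nonsing_inv A hAunit, one_mulVec]
  -- reversal symmetry of A
  have hrev : ∀ t b : Fin 4 → ℝ, A *ᵥ t = b →
      A *ᵥ ![t 3, t 2, t 1, t 0] = ![b 3, b 2, b 1, b 0] := by
    intro t b hb
    have hb0 := congrFun hb 0
    have hb1 := congrFun hb 1
    have hb2 := congrFun hb 2
    have hb3 := congrFun hb 3
    simp [hAdef, Matrix.mulVec, dotProduct, Fin.sum_univ_four] at hb0 hb1 hb2 hb3 ⊢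
    funext i
    fin_cases i <;> simp <;> linarith
  have hu0 := hrev t1 _ hAt1
  have hu1 := hrev t0 _ hAt0
  -- the four fundamental vectors
  have w1 := key t1 _ hAt1
  have w0 := key t0 _ hAt0
  have v0 := key _ _ hu0
  have v1 := key _ _ hu1
  simp only [Matrix.cons_val_zero, Matrix.cons_val_one, Matrix.head_cons,
    Matrix.cons_val_two, Matrix.cons_val_three, Matrix.tail_cons, one_smul, zero_smul,
    add_zero, zero_add] at w1 w0 v0 v1
  -- block decomposition of the inverse
  set B21 := (M⁻¹).toBlocks₂₁ with hB21
  have hMinv : M⁻¹ = fromBlocks Ω1 Ω2 B21 Ω3 := by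
    rw [hΩ1, hΩ2, hΩ3, hB21, fromBlocks_toBlocks]
  rw [hMinv, fromBlocks_mulVec] at w1 w0 v1 v0
  simp only [Sum.elim_comp_inl, Sum.elim_comp_inr, mulVec_zero, add_zero, zero_add]
    at w1 w0 v1 v0
  have g11 : Ω1 *ᵥ δ1 = t1 0 • δ1 + t1 1 • δ0 := by
    funext x; simpa using congrFun w1 (Sum.inl x)
  have g10 : Ω1 *ᵥ δ0 = t0 0 • δ1 + t0 1 • δ0 := by
    funext x; simpa using congrFun w0 (Sum.inl x)
  have g21 : Ω2 *ᵥ δ1 = t0 3 • δ1 + t0 2 • δ0 := by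
    funext x; simpa using congrFun v1 (Sum.inl x)
  have g31 : Ω3 *ᵥ δ1 = t0 1 • δ1 + t0 0 • δ0 := by
    funext x; simpa using congrFun v1 (Sum.inr x)
  have g30 : Ω3 *ᵥ δ0 = t1 1 • δ1 + t1 0 • δ0 := by
    funext x; simpa using congrFun v0 (Sum.inr x)
  have gB0 : B21 *ᵥ δ0 = t0 2 • δ1 + t0 3 • δ0 := by
    funext x; simpa using congrFun w0 (Sum.inr x)
  -- symmetry of M⁻¹ : B21 = Ω2ᵀ
  have hMsymm : Mᵀ = M := by
    rw [hM, fromBlocks_transpose, hΨ1sym.eq, hΨ2sym.eq, hΨ3sym.eq]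
  have hinvsym : (M⁻¹)ᵀ = M⁻¹ := by
    rw [Matrix.transpose_nonsing_inv, hMsymm]
  have hB : Ω2ᵀ = B21 := by
    rw [hΩ2, hB21]
    ext i j
    have := congrFun (congrFun hinvsym (Sum.inl j)) (Sum.inr i)
    simpa [Matrix.toBlocks₁₂, Matrix.toBlocks₂₁, Matrix.transpose_apply] using this.symm
  have hq : δ1 ⬝ᵥ δ0 = δ0 ⬝ᵥ δ1 := dotProduct_comm _ _
  refine ⟨?_, ?_, ?_, ?_, ?_⟩ <;>
    simp only [g11, g10, g21, g31, g30, hB, gB0, dotProduct_add, dotProduct_smul,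
      smul_eq_mul, hδ1, hδ0, hq] <;> ring
end

section
/- Let (Ω, ℱ, P) be a probability space, U₁, U₀, V : Ω → ℝ random variables with (U₁, U₀, V) independent of the random vector (X, Z), and let S₁ : Ω → {0,1} be measurable with respect to σ(X, Z) (so that (U₁, U₀, V) is independent of (X, Z, S₁)). Define D := 𝟙{V ≤ p(X,Z)} and U := D·U₁ + (1−D)·U₀ for a measurable p : ℝ^k × ℝ^m → [0,1]. Then for every Borel A ⊆ ℝ and every z with P(Z = z, S₁ = 1) > 0: P(U ∈ A, D = 1 | Z = z, S₁ = 1) = ∫_{[0,1]} P(U₁ ∈ A, V ≤ t) dν_z(t) and P(U ∈ A, D = 0 | Z = z, S₁ = 1) = ∫_{[0,1]} P(U₀ ∈ A, V > t) dν_z(t), where ν_z denotes the conditional law of p(X,Z) given (Z = z, S₁ = 1). -/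
open MeasureTheory ProbabilityTheory

lemma aux_key {Ω α : Type*} [MeasurableSpace Ω] [MeasurableSpace α]
    (P : Measure Ω) [IsProbabilityMeasure P]
    (T : Ω → ℝ × ℝ × ℝ) (W : Ω → α) (hT : Measurable T) (hW : Measurable W)
    (hindep : IndepFun T W P)
    (g : α → ℝ) (hg : Measurable g)
    (C : Set ((ℝ × ℝ × ℝ) × ℝ)) (hC : MeasurableSet C)
    (B : Set α) (hB : MeasurableSet B) :
    P {ω | (T ω, g (W ω)) ∈ C ∧ W ω ∈ B}
      = ∫⁻ w in B, (Measure.map T P) {t | (t, g w) ∈ C} ∂(Measure.map W P) := by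
  haveI : IsProbabilityMeasure (Measure.map T P) := Measure.isProbabilityMeasure_map hT.aemeasurable
  haveI : IsProbabilityMeasure (Measure.map W P) := Measure.isProbabilityMeasure_map hW.aemeasurable
  have hmap : Measure.map (fun ω => (T ω, W ω)) P = (Measure.map T P).prod (Measure.map W P) :=
    (indepFun_iff_map_prod_eq_prod_map_map hT.aemeasurable hW.aemeasurable).mp hindep
  set S : Set ((ℝ × ℝ × ℝ) × α) := {q | (q.1, g q.2) ∈ C ∧ q.2 ∈ B} with hS
  have hSm : MeasurableSet S := by
    have h1 : Measurable (fun q : (ℝ × ℝ × ℝ) × α => (q.1, g q.2)) :=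
      measurable_fst.prodMk (hg.comp measurable_snd)
    exact (h1 hC).inter (measurable_snd hB)
  have h0 : {ω | (T ω, g (W ω)) ∈ C ∧ W ω ∈ B} = (fun ω => (T ω, W ω)) ⁻¹' S := rfl
  rw [h0, ← Measure.map_apply (hT.prodMk hW) hSm, hmap,
    Measure.prod_apply_symm hSm]
  have h1 : ∀ w, (Measure.map T P) ((fun t => (t, w)) ⁻¹' S)
      = B.indicator (fun w => (Measure.map T P) {t | (t, g w) ∈ C}) w := by
    intro w
    by_cases hw : w ∈ B
    · simp only [Set.indicator_of_mem hw]
      congr 1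
      ext t
      simp [hS, hw]
    · simp only [Set.indicator_of_notMem hw]
      have : (fun t => (t, w)) ⁻¹' S = ∅ := by
        ext t; simp [hS, hw]
      simp [this]
  simp only [h1]
  rw [lintegral_indicator hB]

/-- Equation (18) of the paper: on a distilled sample (inclusion indicator `S₁` measurable
with respect to `σ(X,Z)`, hence independent of the unobservables), the conditional
subprobabilities of `(U ∈ A, D = d)` given `(Z = z, S₁ = 1)` equal mixtures of the monotone
functions `t ↦ P(U₁ ∈ A, V ≤ t)` and `t ↦ P(U₀ ∈ A, V > t)` over the conditional law of
the propensity score. -/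
theorem stmt_17 {Ω : Type*} [MeasurableSpace Ω] (P : Measure Ω) [IsProbabilityMeasure P]
    {k m : ℕ} (U₁ U₀ V : Ω → ℝ) (X : Ω → (Fin k → ℝ)) (Z : Ω → (Fin m → ℝ))
    (p : (Fin k → ℝ) × (Fin m → ℝ) → ℝ) (hp : Measurable p)
    (hp01 : ∀ xz, p xz ∈ Set.Icc (0:ℝ) 1)
    (hU₁ : Measurable U₁) (hU₀ : Measurable U₀) (hV : Measurable V)
    (hX : Measurable X) (hZ : Measurable Z)
    (S₁ : Ω → ℝ) (hS₁vals : ∀ ω, S₁ ω = 0 ∨ S₁ ω = 1)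
    (hS₁meas : Measurable[MeasurableSpace.comap (fun ω => (X ω, Z ω)) inferInstance] S₁)
    (hindep : IndepFun (fun ω => (U₁ ω, U₀ ω, V ω)) (fun ω => (X ω, Z ω)) P)
    (D U : Ω → ℝ)
    (hD : D = fun ω => if V ω ≤ p (X ω, Z ω) then 1 else 0)
    (hU : U = fun ω => D ω * U₁ ω + (1 - D ω) * U₀ ω)
    (A : Set ℝ) (hA : MeasurableSet A)
    (z : Fin m → ℝ) (hz : 0 < P {ω | Z ω = z ∧ S₁ ω = 1}) :
    (P[|{ω | Z ω = z ∧ S₁ ω = 1}]) {ω | U ω ∈ A ∧ D ω = 1}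
        = ∫⁻ t in Set.Icc (0:ℝ) 1, P {ω | U₁ ω ∈ A ∧ V ω ≤ t}
            ∂(Measure.map (fun ω => p (X ω, Z ω)) (P[|{ω | Z ω = z ∧ S₁ ω = 1}]))
    ∧ (P[|{ω | Z ω = z ∧ S₁ ω = 1}]) {ω | U ω ∈ A ∧ D ω = 0}
        = ∫⁻ t in Set.Icc (0:ℝ) 1, P {ω | U₀ ω ∈ A ∧ t < V ω}
            ∂(Measure.map (fun ω => p (X ω, Z ω)) (P[|{ω | Z ω = z ∧ S₁ ω = 1}])) := by
  set W : Ω → (Fin k → ℝ) × (Fin m → ℝ) := fun ω => (X ω, Z ω) with hWdef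
  set T : Ω → ℝ × ℝ × ℝ := fun ω => (U₁ ω, U₀ ω, V ω) with hTdef
  have hW : Measurable W := hX.prodMk hZ
  have hT : Measurable T := hU₁.prodMk (hU₀.prodMk hV)
  set E : Set Ω := {ω | Z ω = z ∧ S₁ ω = 1} with hEdef
  -- factor E through W
  obtain ⟨B₁, hB₁m, hB₁eq⟩ := hS₁meas (measurableSet_singleton (1:ℝ))
  set B : Set ((Fin k → ℝ) × (Fin m → ℝ)) := B₁ ∩ {w | w.2 = z} with hBdef
  have hBm : MeasurableSet B :=
    hB₁m.inter (measurable_snd (measurableSet_singleton z))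
  have hEeq : E = W ⁻¹' B := by
    ext ω
    have : (W ω ∈ B₁) ↔ S₁ ω = 1 := by
      constructor
      · intro h; have := hB₁eq ▸ (Set.mem_preimage.mpr h : ω ∈ W ⁻¹' B₁); exact this
      · intro h
        have : ω ∈ S₁ ⁻¹' {1} := h
        rw [← hB₁eq] at this; exact this
    simp [hEdef, hBdef, this, and_comm]; exact fun _ => Iff.rfl
  have hEm : MeasurableSet E := hEeq ▸ hW hBm
  have hPE : P E ≠ 0 := ne_of_gt hz
  have hPEtop : P E ≠ ⊤ := measure_ne_top P E
  -- general computation for one side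
  have main : ∀ (C : Set ((ℝ × ℝ × ℝ) × ℝ)), MeasurableSet C →
      ∀ (F : ℝ → ENNReal), Measurable F →
      (∀ s, F s = P {ω | (T ω, s) ∈ C}) →
      (P[|E]) {ω | (T ω, p (W ω)) ∈ C}
        = ∫⁻ t in Set.Icc (0:ℝ) 1, F t ∂(Measure.map (fun ω => p (W ω)) (P[|E])) := by
    intro C hC F hF hFeq
    have key := aux_key P T W hT hW hindep p hp C hC B hBm
    -- rewrite F via map measure
    have hFeq' : ∀ s, F s = (Measure.map T P) {t | (t, s) ∈ C} := by
      intro s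
      rw [hFeq s, Measure.map_apply hT]
      · rfl
      · exact (measurable_id.prodMk measurable_const) hC
    -- RHS: remove the Icc restriction
    have hpW : Measurable (fun ω => p (W ω)) := hp.comp hW
    have hmapE : (Measure.map (fun ω => p (W ω)) (P[|E])) (Set.Icc (0:ℝ) 1)ᶜ = 0 := by
      rw [Measure.map_apply hpW (measurableSet_Icc.compl)]
      have : (fun ω => p (W ω)) ⁻¹' (Set.Icc (0:ℝ) 1)ᶜ = ∅ := by
        ext ω; simp only [Set.mem_preimage, Set.mem_compl_iff, Set.mem_empty_iff_false,
          iff_false, not_not]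
        exact hp01 (W ω)
      rw [this]; simp
    have hrestr : (Measure.map (fun ω => p (W ω)) (P[|E])).restrict (Set.Icc (0:ℝ) 1)
        = Measure.map (fun ω => p (W ω)) (P[|E]) :=
      Measure.restrict_eq_self_of_ae_mem (by
        rw [Filter.eventually_iff, mem_ae_iff]
        exact hmapE)
    rw [show (∫⁻ t in Set.Icc (0:ℝ) 1, F t
          ∂(Measure.map (fun ω => p (W ω)) (P[|E])))
        = ∫⁻ t, F t ∂(Measure.map (fun ω => p (W ω)) (P[|E])) by rw [hrestr]]
    rw [lintegral_map hF hpW]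
    -- unfold conditional measure
    rw [ProbabilityTheory.cond, lintegral_smul_measure, Measure.smul_apply, smul_eq_mul,
      Measure.restrict_apply' hEm]
    have hset : {ω | (T ω, p (W ω)) ∈ C} ∩ E = {ω | (T ω, p (W ω)) ∈ C ∧ W ω ∈ B} := by
      rw [hEeq]; rfl
    rw [hset, key]
    congr 1
    have hgF : (fun w => (Measure.map T P) {t | (t, p w) ∈ C}) = fun w => F (p w) :=
      funext fun w => (hFeq' (p w)).symm
    rw [hEeq, hgF]
    exact setLIntegral_map hBm (show Measurable fun w => F (p w) from hF.comp hp) hW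
  constructor
  · -- D = 1 case
    have hset1 : {ω | U ω ∈ A ∧ D ω = 1}
        = {ω | (T ω, p (W ω)) ∈ {q : (ℝ × ℝ × ℝ) × ℝ | q.1.1 ∈ A ∧ q.1.2.2 ≤ q.2}} := by
      ext ω
      subst hD hU
      by_cases h : V ω ≤ p (X ω, Z ω) <;> simp [h, hTdef, hWdef]
    have hC : MeasurableSet {q : (ℝ × ℝ × ℝ) × ℝ | q.1.1 ∈ A ∧ q.1.2.2 ≤ q.2} := by
      refine ((measurable_fst.comp measurable_fst) hA).inter ?_
      exact measurableSet_le (measurable_snd.comp (measurable_snd.comp measurable_fst))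
        measurable_snd
    have hmono : Monotone (fun s => P {ω | U₁ ω ∈ A ∧ V ω ≤ s}) := by
      intro s t hst
      exact measure_mono fun ω ⟨h1, h2⟩ => ⟨h1, h2.trans hst⟩
    have := main _ hC (fun s => P {ω | U₁ ω ∈ A ∧ V ω ≤ s}) hmono.measurable
      (fun s => by simp [hTdef])
    rw [hset1]
    exact this
  · -- D = 0 case
    have hset0 : {ω | U ω ∈ A ∧ D ω = 0}
        = {ω | (T ω, p (W ω)) ∈ {q : (ℝ × ℝ × ℝ) × ℝ | q.1.2.1 ∈ A ∧ q.2 < q.1.2.2}} := by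
      ext ω
      subst hD hU
      by_cases h : V ω ≤ p (X ω, Z ω)
      · simp [hTdef, hWdef, h, not_lt.mpr h]
      · simp [hTdef, hWdef, h, not_le.mp h]
    have hC : MeasurableSet {q : (ℝ × ℝ × ℝ) × ℝ | q.1.2.1 ∈ A ∧ q.2 < q.1.2.2} := by
      refine ((measurable_fst.comp (measurable_snd.comp measurable_fst)) hA).inter ?_
      exact measurableSet_lt measurable_snd
        (measurable_snd.comp (measurable_snd.comp measurable_fst))
    have hanti : Antitone (fun s => P {ω | U₀ ω ∈ A ∧ s < V ω}) := by
      intro s t hst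
      exact measure_mono fun ω ⟨h1, h2⟩ => ⟨h1, lt_of_le_of_lt hst h2⟩
    have := main _ hC (fun s => P {ω | U₀ ω ∈ A ∧ s < V ω}) hanti.measurable
      (fun s => by simp [hTdef])
    rw [hset0]
    exact this
end
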